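/- Let w solve ∂_t w = (1/ρ) ∂_x((∂_x w)/ρ) on (0,L) with boundary dynamics (d/dt)w(t,0) = −w(t,0), (d/dt)w(t,L) = −w(t,L), where ρ : [0,L] → ℝ is smooth, time-independent, with 0 < d_l ≤ ρ ≤ d_u. Then the functional V(t) = (1/2)∫₀^L ρ|w|² dx + (1/2)∫₀^L (1/ρ)|∂_x w|² dx satisfies dV/dt = −∫₀^L (1/ρ)|∂_x w|² dx − ∫₀^L (1/ρ)|∂_x((∂_x w)/ρ)|² dx ≤ 0 along sufficiently smooth solutions. -/

import Mathlib

open Set MeasureTheory intervalIntegral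

/-- Differentiation under the interval integral sign, for integrands that are
continuous (together with their `t`-derivative) on `univ ×ˢ uIcc a b`. -/
lemma hasDerivAt_intervalIntegral_of_contOn
    (a b t : ℝ) (G G' : ℝ → ℝ → ℝ)
    (hG : ContinuousOn (fun p : ℝ × ℝ => G p.1 p.2) (univ ×ˢ uIcc a b))
    (hG' : ContinuousOn (fun p : ℝ × ℝ => G' p.1 p.2) (univ ×ˢ uIcc a b))
    (hd : ∀ (τ : ℝ), ∀ x ∈ uIcc a b, HasDerivAt (fun σ => G σ x) (G' τ x) τ) :
    HasDerivAt (fun τ => ∫ x in a..b, G τ x) (∫ x in a..b, G' t x) t := by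
  have hmap : ∀ τ : ℝ, MapsTo (fun x : ℝ => (τ, x)) (uIcc a b) (univ ×ˢ uIcc a b) :=
    fun τ x hx => ⟨mem_univ _, hx⟩
  have hsl : ∀ τ : ℝ, ContinuousOn (fun x => G τ x) (uIcc a b) := fun τ =>
    hG.comp (continuous_const.prodMk continuous_id).continuousOn (hmap τ)
  have hsl' : ∀ τ : ℝ, ContinuousOn (fun x => G' τ x) (uIcc a b) := fun τ =>
    hG'.comp (continuous_const.prodMk continuous_id).continuousOn (hmap τ)
  have hK : IsCompact ((Icc (t - 1) (t + 1)) ×ˢ (uIcc a b)) :=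
    isCompact_Icc.prod isCompact_uIcc
  obtain ⟨C, hC⟩ := hK.exists_bound_of_continuousOn
    (hG'.mono (fun p hp => ⟨mem_univ _, hp.2⟩))
  have hball : Metric.ball t 1 ⊆ Icc (t - 1) (t + 1) := by
    intro τ hτ
    rw [Real.ball_eq_Ioo] at hτ
    exact ⟨hτ.1.le, hτ.2.le⟩
  have key := intervalIntegral.hasDerivAt_integral_of_dominated_loc_of_deriv_le
    (𝕜 := ℝ) (μ := volume) (F := fun τ x => G τ x) (F' := fun τ x => G' τ x)
    (x₀ := t) (bound := fun _ => C) (a := a) (b := b) (s := Metric.ball t 1) (Metric.ball_mem_nhds t one_pos)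
    (Filter.Eventually.of_forall fun τ =>
      ((hsl τ).mono uIoc_subset_uIcc).aestronglyMeasurable measurableSet_uIoc)
    ((hsl t).intervalIntegrable)
    (((hsl' t).mono uIoc_subset_uIcc).aestronglyMeasurable measurableSet_uIoc)
    (Filter.Eventually.of_forall fun x hx τ hτ =>
      hC (τ, x) ⟨hball hτ, uIoc_subset_uIcc hx⟩)
    intervalIntegrable_const
    (Filter.Eventually.of_forall fun x hx τ _ => hd τ x (uIoc_subset_uIcc hx))
  exact key.2

/-- Lyapunov identity for the weighted diffusion equation
`∂ₜw = (1/ρ)∂ₓ((∂ₓw)/ρ)` on `(0,L)` with boundary dynamics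
`(d/dt)w(t,0) = −w(t,0)`, `(d/dt)w(t,L) = −w(t,L)`: the functional
`V = ½∫ ρ w² + ½∫ (1/ρ)(∂ₓw)²` satisfies
`dV/dt = −∫ (1/ρ)(∂ₓw)² − ∫ (1/ρ)(∂ₓ((∂ₓw)/ρ))² ≤ 0`. -/
theorem weighted_diffusion_lyapunov_decay
    (L : ℝ) (hL : 0 < L) (dl du : ℝ) (hdl : 0 < dl)
    (ρ : ℝ → ℝ) (hρ : ContDiff ℝ (⊤ : ℕ∞) ρ)
    (hρbd : ∀ x ∈ Icc 0 L, dl ≤ ρ x ∧ ρ x ≤ du)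
    (w : ℝ → ℝ → ℝ)
    (hw : ContDiff ℝ (⊤ : ℕ∞) fun p : ℝ × ℝ => w p.1 p.2)
    (hPDE : ∀ t : ℝ, ∀ x ∈ Ioo 0 L,
      deriv (fun τ => w τ x) t
        = (1 / ρ x) * deriv (fun y => deriv (w t) y / ρ y) x)
    (hbd0 : ∀ t : ℝ, deriv (fun τ => w τ 0) t = -(w t 0))
    (hbdL : ∀ t : ℝ, deriv (fun τ => w τ L) t = -(w t L))
    (V : ℝ → ℝ)
    (hV : ∀ t, V t = (1/2) * (∫ x in (0:ℝ)..L, ρ x * (w t x)^2)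
                   + (1/2) * (∫ x in (0:ℝ)..L, (1 / ρ x) * (deriv (w t) x)^2)) :
    ∀ t : ℝ,
      HasDerivAt V
        (-(∫ x in (0:ℝ)..L, (1 / ρ x) * (deriv (w t) x)^2)
         - ∫ x in (0:ℝ)..L, (1 / ρ x) * (deriv (fun y => deriv (w t) y / ρ y) x)^2) t ∧
      (-(∫ x in (0:ℝ)..L, (1 / ρ x) * (deriv (w t) x)^2)
        - ∫ x in (0:ℝ)..L, (1 / ρ x) * (deriv (fun y => deriv (w t) y / ρ y) x)^2) ≤ 0 := by
  intro t
  set W : ℝ × ℝ → ℝ := fun p => w p.1 p.2 with hW_def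
  have hWdiff : Differentiable ℝ W := hw.differentiable (by simp)
  have hdW : ContDiff ℝ (⊤ : ℕ∞) (fderiv ℝ W) := hw.fderiv_right (m := (⊤ : ℕ∞)) (by simp)
  have hdWdiff : Differentiable ℝ (fderiv ℝ W) := hdW.differentiable (by simp)
  set F2 : ℝ × ℝ → (ℝ × ℝ) →L[ℝ] (ℝ × ℝ) →L[ℝ] ℝ := fderiv ℝ (fderiv ℝ W) with hF2_def
  have hF2cont : Continuous F2 := (hdW.fderiv_right (m := (⊤ : ℕ∞)) (by simp)).continuous
  set WT : ℝ × ℝ → ℝ := fun p => fderiv ℝ W p (1, 0) with hWT_def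
  set WX : ℝ × ℝ → ℝ := fun p => fderiv ℝ W p (0, 1) with hWX_def
  have contWT : Continuous WT := hdW.continuous.clm_apply continuous_const
  have contWX : Continuous WX := hdW.continuous.clm_apply continuous_const
  -- partial derivative in time
  have hWt : ∀ (s x : ℝ), HasDerivAt (fun τ => w τ x) (WT (s, x)) s := by
    intro s x
    have h1 : HasDerivAt (fun τ : ℝ => ((τ, x) : ℝ × ℝ)) ((1 : ℝ), (0 : ℝ)) s :=
      (hasDerivAt_id s).prodMk (hasDerivAt_const s x)
    exact (hWdiff (s, x)).hasFDerivAt.comp_hasDerivAt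
      (f := fun τ : ℝ => ((τ, x) : ℝ × ℝ)) s h1
  have hwt_eq : ∀ (s x : ℝ), deriv (fun τ => w τ x) s = WT (s, x) :=
    fun s x => (hWt s x).deriv
  -- partial derivative in space
  have hWx : ∀ (s x : ℝ), HasDerivAt (w s) (WX (s, x)) x := by
    intro s x
    have h1 : HasDerivAt (fun y : ℝ => ((s, y) : ℝ × ℝ)) ((0 : ℝ), (1 : ℝ)) x :=
      (hasDerivAt_const x s).prodMk (hasDerivAt_id x)
    exact (hWdiff (s, x)).hasFDerivAt.comp_hasDerivAt
      (f := fun y : ℝ => ((s, y) : ℝ × ℝ)) x h1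
  have hwx_eq : ∀ (s x : ℝ), deriv (w s) x = WX (s, x) :=
    fun s x => (hWx s x).deriv
  -- symmetry of second derivatives
  have hsymm : ∀ (p : ℝ × ℝ) (u v : ℝ × ℝ), F2 p u v = F2 p v u :=
    fun p => second_derivative_symmetric (fun q => (hWdiff q).hasFDerivAt)
      (hdWdiff p).hasFDerivAt
  -- mixed second derivatives
  have hWT_x : ∀ (s x : ℝ),
      HasDerivAt (fun y => WT (s, y)) (F2 (s, x) (0, 1) (1, 0)) x := by
    intro s x
    have h1 : HasDerivAt (fun y : ℝ => ((s, y) : ℝ × ℝ)) ((0 : ℝ), (1 : ℝ)) x :=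
      (hasDerivAt_const x s).prodMk (hasDerivAt_id x)
    have h2 : HasDerivAt (fun y : ℝ => fderiv ℝ W (s, y)) (F2 (s, x) (0, 1)) x :=
      (hdWdiff (s, x)).hasFDerivAt.comp_hasDerivAt
        (f := fun y : ℝ => ((s, y) : ℝ × ℝ)) x h1
    have h3 := h2.clm_apply (hasDerivAt_const x ((1 : ℝ), (0 : ℝ)))
    simpa using h3
  have hWX_t : ∀ (s x : ℝ),
      HasDerivAt (fun τ => WX (τ, x)) (F2 (s, x) (1, 0) (0, 1)) s := by
    intro s x
    have h1 : HasDerivAt (fun τ : ℝ => ((τ, x) : ℝ × ℝ)) ((1 : ℝ), (0 : ℝ)) s :=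
      (hasDerivAt_id s).prodMk (hasDerivAt_const s x)
    have h2 : HasDerivAt (fun τ : ℝ => fderiv ℝ W (τ, x)) (F2 (s, x) (1, 0)) s :=
      (hdWdiff (s, x)).hasFDerivAt.comp_hasDerivAt
        (f := fun τ : ℝ => ((τ, x) : ℝ × ℝ)) s h1
    have h3 := h2.clm_apply (hasDerivAt_const s ((0 : ℝ), (1 : ℝ)))
    simpa using h3
  have hWX_x : ∀ (s x : ℝ),
      HasDerivAt (fun y => WX (s, y)) (F2 (s, x) (0, 1) (0, 1)) x := by
    intro s x
    have h1 : HasDerivAt (fun y : ℝ => ((s, y) : ℝ × ℝ)) ((0 : ℝ), (1 : ℝ)) x :=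
      (hasDerivAt_const x s).prodMk (hasDerivAt_id x)
    have h2 : HasDerivAt (fun y : ℝ => fderiv ℝ W (s, y)) (F2 (s, x) (0, 1)) x :=
      (hdWdiff (s, x)).hasFDerivAt.comp_hasDerivAt
        (f := fun y : ℝ => ((s, y) : ℝ × ℝ)) x h1
    have h3 := h2.clm_apply (hasDerivAt_const x ((0 : ℝ), (1 : ℝ)))
    simpa using h3
  -- density facts
  have contρ : Continuous ρ := hρ.continuous
  have contρ' : Continuous (deriv ρ) := hρ.continuous_deriv (by simp)
  have huIcc : uIcc (0 : ℝ) L = Icc 0 L := uIcc_of_le hL.le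
  have hρpos : ∀ x ∈ uIcc (0 : ℝ) L, 0 < ρ x := by
    intro x hx
    rw [huIcc] at hx
    exact hdl.trans_le (hρbd x hx).1
  have hρne : ∀ x ∈ uIcc (0 : ℝ) L, ρ x ≠ 0 := fun x hx => (hρpos x hx).ne'
  -- the flux function q and its derivative qd
  set q : ℝ → ℝ := fun y => deriv (w t) y / ρ y with hq_def
  have hq_eq : q = fun y => WX (t, y) / ρ y := by
    funext y; simp only [hq_def, hwx_eq]
  set qd : ℝ → ℝ :=
    fun x => (F2 (t, x) (0, 1) (0, 1) * ρ x - WX (t, x) * deriv ρ x) / (ρ x) ^ 2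
    with hqd_def
  have hq : ∀ x ∈ uIcc (0 : ℝ) L, HasDerivAt q (qd x) x := by
    intro x hx
    rw [hq_eq]
    exact (hWX_x t x).div ((hρ.differentiable (by simp) x).hasDerivAt) (hρne x hx)
  have hqd_eq : ∀ x ∈ uIcc (0 : ℝ) L, deriv q x = qd x :=
    fun x hx => (hq x hx).deriv
  have contqd : ContinuousOn qd (uIcc (0 : ℝ) L) := by
    have c2 : Continuous fun x : ℝ => WX (t, x) :=
      contWX.comp (continuous_const.prodMk continuous_id)
    have c3 : Continuous fun x : ℝ => F2 (t, x) (0, 1) (0, 1) :=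
      ((hF2cont.comp (continuous_const.prodMk continuous_id)).clm_apply
        continuous_const).clm_apply continuous_const
    exact ((c3.mul contρ).sub (c2.mul contρ')).continuousOn.div
      ((contρ.pow 2).continuousOn) (fun x hx => pow_ne_zero _ (hρne x hx))
  -- PDE in the new notation
  have hPDE' : ∀ x ∈ Ioo 0 L, WT (t, x) = (1 / ρ x) * qd x := by
    intro x hx
    have hx' : x ∈ uIcc (0 : ℝ) L := by
      rw [huIcc]; exact ⟨hx.1.le, hx.2.le⟩
    have h1 := hPDE t x hx
    rw [hwt_eq] at h1
    rw [h1]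
    congr 1
    exact hqd_eq x hx'
  -- differentiation under the integral sign: first term
  have I1 : HasDerivAt (fun τ => ∫ x in (0:ℝ)..L, ρ x * (w τ x) ^ 2)
      (∫ x in (0:ℝ)..L, ρ x * (2 * w t x ^ 1 * WT (t, x))) t := by
    apply hasDerivAt_intervalIntegral_of_contOn 0 L t
      (fun τ x => ρ x * (w τ x) ^ 2)
      (fun τ x => ρ x * (2 * w τ x ^ 1 * WT (τ, x)))
    · exact ((contρ.comp continuous_snd).mul (hw.continuous.pow 2)).continuousOn
    · exact ((contρ.comp continuous_snd).mul
        (((continuous_const.mul (hw.continuous.pow 1)).mul contWT))).continuousOn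
    · intro τ x _
      exact ((hWt τ x).pow 2).const_mul (ρ x)
  -- differentiation under the integral sign: second term
  have hfun2 : (fun τ => ∫ x in (0:ℝ)..L, (1 / ρ x) * (deriv (w τ) x) ^ 2)
      = fun τ => ∫ x in (0:ℝ)..L, (1 / ρ x) * (WX (τ, x)) ^ 2 := by
    funext τ
    exact intervalIntegral.integral_congr fun x _ => by rw [hwx_eq]
  have I2 : HasDerivAt (fun τ => ∫ x in (0:ℝ)..L, (1 / ρ x) * (deriv (w τ) x) ^ 2)
      (∫ x in (0:ℝ)..L, (1 / ρ x) * (2 * WX (t, x) ^ 1 * F2 (t, x) (1, 0) (0, 1))) t := by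
    rw [hfun2]
    apply hasDerivAt_intervalIntegral_of_contOn 0 L t
      (fun τ x => (1 / ρ x) * (WX (τ, x)) ^ 2)
      (fun τ x => (1 / ρ x) * (2 * WX (τ, x) ^ 1 * F2 (τ, x) (1, 0) (0, 1)))
    · refine ContinuousOn.mul ?_ (contWX.pow 2).continuousOn
      exact continuousOn_const.div ((contρ.comp continuous_snd).continuousOn)
        (fun p hp => hρne p.2 hp.2)
    · refine ContinuousOn.mul ?_ ?_
      · exact continuousOn_const.div ((contρ.comp continuous_snd).continuousOn)
          (fun p hp => hρne p.2 hp.2)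
      · exact ((continuous_const.mul (contWX.pow 1)).mul
          ((hF2cont.clm_apply continuous_const).clm_apply continuous_const)).continuousOn
    · intro τ x _
      exact ((hWX_t τ x).pow 2).const_mul (1 / ρ x)
  -- derivative of V
  have hVfun : V = fun τ => (1/2) * (∫ x in (0:ℝ)..L, ρ x * (w τ x)^2)
      + (1/2) * (∫ x in (0:ℝ)..L, (1 / ρ x) * (deriv (w τ) x)^2) := funext hV
  have hVd : HasDerivAt V
      ((1/2) * (∫ x in (0:ℝ)..L, ρ x * (2 * w t x ^ 1 * WT (t, x)))
        + (1/2) * (∫ x in (0:ℝ)..L,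
            (1 / ρ x) * (2 * WX (t, x) ^ 1 * F2 (t, x) (1, 0) (0, 1)))) t := by
    rw [hVfun]
    exact (I1.const_mul (1/2 : ℝ)).add (I2.const_mul (1/2 : ℝ))
  -- a.e. congruence helper to pass from Ioc to Ioo
  have haeL : ∀ᵐ x : ℝ ∂volume, x ≠ L := by
    have : (volume ({L} : Set ℝ)) = 0 := measure_singleton L
    exact (MeasureTheory.compl_mem_ae_iff).mpr this
  have hIoc_mem : ∀ x : ℝ, x ∈ Set.uIoc (0:ℝ) L → x ≠ L → x ∈ Ioo 0 L := by
    intro x hx hne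
    rw [uIoc_of_le hL.le] at hx
    exact ⟨hx.1, lt_of_le_of_ne hx.2 hne⟩
  have hIoo_sub : ∀ x : ℝ, x ∈ Ioo 0 L → x ∈ uIcc (0:ℝ) L := by
    intro x hx; rw [huIcc]; exact ⟨hx.1.le, hx.2.le⟩
  -- first term: ½ D1 = ∫ w q' and integrate by parts
  have hA1 : (1/2 : ℝ) * (∫ x in (0:ℝ)..L, ρ x * (2 * w t x ^ 1 * WT (t, x)))
      = ∫ x in (0:ℝ)..L, w t x * qd x := by
    rw [← intervalIntegral.integral_const_mul]
    apply intervalIntegral.integral_congr_ae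
    filter_upwards [haeL] with x hne hx
    have hxo := hIoc_mem x hx hne
    have hxI := hIoo_sub x hxo
    rw [hPDE' x hxo]
    have hρx : ρ x ≠ 0 := hρne x hxI
    field_simp
  have hIBP1 : ∫ x in (0:ℝ)..L, w t x * qd x
      = w t L * q L - w t 0 * q 0 - ∫ x in (0:ℝ)..L, WX (t, x) * q x := by
    apply intervalIntegral.integral_mul_deriv_eq_deriv_mul
      (fun x _ => hWx t x) (fun x hx => hq x hx)
    · exact (contWX.comp (continuous_const.prodMk continuous_id)).continuousOn.intervalIntegrable
    · exact contqd.intervalIntegrable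
  have hA2 : ∫ x in (0:ℝ)..L, WX (t, x) * q x
      = ∫ x in (0:ℝ)..L, (1 / ρ x) * (deriv (w t) x) ^ 2 := by
    apply intervalIntegral.integral_congr
    intro x _
    simp only [hq_def, hwx_eq]
    ring
  -- second term: ½ D2 = ∫ q * (∂ₓ wt) and integrate by parts
  have hB1 : (1/2 : ℝ) * (∫ x in (0:ℝ)..L,
        (1 / ρ x) * (2 * WX (t, x) ^ 1 * F2 (t, x) (1, 0) (0, 1)))
      = ∫ x in (0:ℝ)..L, q x * F2 (t, x) (1, 0) (0, 1) := by
    rw [← intervalIntegral.integral_const_mul]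
    apply intervalIntegral.integral_congr
    intro x _
    rw [hq_eq]
    ring
  have hIBP2 : ∫ x in (0:ℝ)..L, q x * F2 (t, x) (1, 0) (0, 1)
      = q L * WT (t, L) - q 0 * WT (t, 0) - ∫ x in (0:ℝ)..L, qd x * WT (t, x) := by
    apply intervalIntegral.integral_mul_deriv_eq_deriv_mul
      (fun x hx => hq x hx)
      (fun x _ => by rw [hsymm (t, x) (1, 0) (0, 1)]; exact hWT_x t x)
    · exact contqd.intervalIntegrable
    · refine Continuous.intervalIntegrable ?_ _ _
      exact ((hF2cont.comp (continuous_const.prodMk continuous_id)).clm_apply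
        continuous_const).clm_apply continuous_const
  have hB2 : ∫ x in (0:ℝ)..L, qd x * WT (t, x)
      = ∫ x in (0:ℝ)..L, (1 / ρ x) * (deriv q x) ^ 2 := by
    apply intervalIntegral.integral_congr_ae
    filter_upwards [haeL] with x hne hx
    have hxo := hIoc_mem x hx hne
    have hxI := hIoo_sub x hxo
    rw [hPDE' x hxo, hqd_eq x hxI]
    ring
  -- boundary values
  have hbL : WT (t, L) = -(w t L) := by rw [← hwt_eq]; exact hbdL t
  have hb0 : WT (t, 0) = -(w t 0) := by rw [← hwt_eq]; exact hbd0 t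
  -- assemble
  have hfinal : (1/2) * (∫ x in (0:ℝ)..L, ρ x * (2 * w t x ^ 1 * WT (t, x)))
      + (1/2) * (∫ x in (0:ℝ)..L,
          (1 / ρ x) * (2 * WX (t, x) ^ 1 * F2 (t, x) (1, 0) (0, 1)))
      = -(∫ x in (0:ℝ)..L, (1 / ρ x) * (deriv (w t) x)^2)
        - ∫ x in (0:ℝ)..L, (1 / ρ x) * (deriv q x)^2 := by
    rw [hA1, hIBP1, hA2, hB1, hIBP2, hB2, hbL, hb0]
    ring
  rw [hfinal] at hVd
  refine ⟨hVd, ?_⟩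
  have hnn1 : 0 ≤ ∫ x in (0:ℝ)..L, (1 / ρ x) * (deriv (w t) x)^2 := by
    apply intervalIntegral.integral_nonneg hL.le
    intro x hx
    have hx' : x ∈ uIcc (0:ℝ) L := by rw [huIcc]; exact hx
    exact mul_nonneg (div_nonneg zero_le_one (hρpos x hx').le) (sq_nonneg _)
  have hnn2 : 0 ≤ ∫ x in (0:ℝ)..L, (1 / ρ x) * (deriv q x)^2 := by
    apply intervalIntegral.integral_nonneg hL.le
    intro x hx
    have hx' : x ∈ uIcc (0:ℝ) L := by rw [huIcc]; exact hx
    exact mul_nonneg (div_nonneg zero_le_one (hρpos x hx').le) (sq_nonneg _)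
  linarith
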